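/- Let F_q be a finite field of characteristic 2, a, b ∈ F_q with b ≠ 0, and n ≥ 2 an integer. Write n+1 = 2^r·(m+1) with r ≥ 1 and m+1 odd. Then m is even, and: (i) if m > 0, the code Ĉ_n(a,b) with generator matrix (I_n | T̂_n(a,b)) is LCD — equivalently, I_n + T̂_n(a,b)² is invertible — if and only if a/b ∉ {−1/b} ∪ { −1/b + θ^i + θ^{−i} : 1 ≤ i ≤ m/2 }, where θ is a primitive (m+1)-th root of unity in an algebraic closure of F_q and F_q is identified with its image in the closure; (ii) if m = 0, Ĉ_n(a,b) is LCD if and only if a ≠ 1. -/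

import Mathlib

/-!
In characteristic 2, `1 + T̂² = (1 + T̂)²` and `1 + T̂_n(a, b) = b • T̂_n((1 + a) / b, 1)`.
A kernel vector of `T̂_n(c, 1)` obeys the three-term recurrence of the Chebyshev polynomials
`S_k`, so it is determined by its first entry, and one exists iff `S_n(-c) = 0`. Writing
`c = x + x⁻¹` in the algebraic closure, `c · S_n(c) = x^(n+1) + x^-(n+1)` in characteristic 2,
so for odd `n` the roots of `S_n` are the `x + x⁻¹` with `x^(n+1) = 1`. Since Frobenius is
injective these are the `x` with `x^(m+1) = 1`, i.e. the powers of `θ`, and `θ^i`, `θ^-i` give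
the same root; `i = 0` gives the root `0`.
-/

/-- The `n × n` tridiagonal Toeplitz matrix with diagonal entries `a` and
sub/super-diagonal entries `b`. -/
def triToeplitz (F : Type*) [Field F] (n : ℕ) (a b : F) :
    Matrix (Fin n) (Fin n) F :=
  Matrix.of fun i j =>
    if (i : ℕ) = (j : ℕ) then a
    else if (i : ℕ) + 1 = (j : ℕ) ∨ (j : ℕ) + 1 = (i : ℕ) then b
    else 0

open Polynomial Polynomial.Chebyshev Matrix

lemma pow_expChar_pow_mul_eq_one_iff {R : Type*} [CommRing R] [IsReduced R] (p : ℕ)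
    [ExpChar R p] {x : R} (r k : ℕ) : x ^ (p ^ r * k) = 1 ↔ x ^ k = 1 := by
  rw [mul_comm, pow_mul, ← iterateFrobenius_def]
  exact (iterateFrobenius_inj R p r).eq_iff' (map_one _)

section Chebyshev

variable {R : Type*} [CommRing R]

lemma S_eval_add_one (x : R) (k : ℤ) :
    (S R (k + 1)).eval x = x * (S R k).eval x - (S R (k - 1)).eval x := by
  simp [S_add_one]

lemma S_eval_zero_of_odd {n : ℤ} (hn : Odd n) : (S R n).eval 0 = 0 := by
  simpa [← S_comp_two_mul_X, eval_comp] using U_eval_zero_of_odd (R := R) hn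

lemma S_eval_add_mul_eq_of_mul_eq_one [CharP R 2] {x y : R} (h : x * y = 1) (n : ℕ) :
    (x + y) * (S R n).eval (x + y) = x ^ (n + 1) + y ^ (n + 1) := by
  have hC := dickson_one_one_eval_add_inv x y h (n + 1)
  rw [dickson_one_one_eq_chebyshev_C, Nat.cast_add, Nat.cast_one] at hC
  have := congrArg (eval (x + y)) (S_eq_X_mul_S_add_C R n)
  simp only [eval_mul, CharTwo.two_eq_zero, zero_mul, eval_zero, eval_X, eval_add, hC] at this
  exact CharTwo.add_eq_zero.mp this.symm

section CharTwo

variable {K : Type*} [Field K] [CharP K 2]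

lemma add_inv_eq_zero_iff {x : K} (hx : x ≠ 0) : x + x⁻¹ = 0 ↔ x = 1 := by
  rw [CharTwo.add_eq_zero, ← mul_eq_one_iff_eq_inv₀ hx, ← sq, ← one_pow 2, CharTwo.sq_inj,
    one_pow]

lemma S_eval_add_inv_eq_zero_iff {x : K} (hx : x ≠ 0) {n : ℕ} (hn : Odd n) :
    (S K n).eval (x + x⁻¹) = 0 ↔ x ^ (n + 1) = 1 := by
  by_cases hx₁ : x = 1
  · subst hx₁
    simp [CharTwo.add_self_eq_zero, S_eval_zero_of_odd (hn.natCast (R := ℤ))]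
  have key := S_eval_add_mul_eq_of_mul_eq_one (mul_inv_cancel₀ hx) n
  rw [inv_pow] at key
  rw [← add_inv_eq_zero_iff (pow_ne_zero _ hx), ← key, mul_eq_zero,
    or_iff_right (mt (add_inv_eq_zero_iff hx).mp hx₁)]

end CharTwo

end Chebyshev

section TriToeplitz

variable {F : Type*} [Field F] {n : ℕ}

-- Extending by zero lets the first and last rows of `T̂ *ᵥ v` be treated like the others.
def zeroExtend (v : Fin n → F) (k : ℤ) : F :=
  ∑ j : Fin n, if (j : ℤ) = k then v j else 0

lemma zeroExtend_coe (v : Fin n → F) (j : Fin n) : zeroExtend v j = v j := by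
  simp [zeroExtend, Fin.val_inj]

lemma zeroExtend_neg_one (v : Fin n → F) : zeroExtend v (-1) = 0 :=
  Finset.sum_eq_zero fun j _ => if_neg (by omega)

lemma zeroExtend_natCast_self (v : Fin n → F) : zeroExtend v n = 0 :=
  Finset.sum_eq_zero fun j _ => if_neg (by omega)

lemma triToeplitz_apply_eq (a b : F) (i j : Fin n) :
    triToeplitz F n a b i j =
      (if (j : ℤ) = i - 1 then b else 0) + (if (j : ℤ) = i then a else 0) +
        (if (j : ℤ) = i + 1 then b else 0) := by
  simp only [triToeplitz, of_apply]
  split_ifs <;> first | omega | simp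

lemma triToeplitz_mulVec_apply (a b : F) (v : Fin n → F) (i : Fin n) :
    (triToeplitz F n a b *ᵥ v) i =
      b * zeroExtend v (i - 1) + a * v i + b * zeroExtend v (i + 1) := by
  rw [← zeroExtend_coe v i]
  simp only [mulVec, dotProduct, triToeplitz_apply_eq, zeroExtend, add_mul, ite_mul, zero_mul,
    Finset.sum_add_distrib, Finset.mul_sum, mul_ite, mul_zero]

lemma zeroExtend_eq_mul_S_of_mulVec_eq_zero {c : F} {v : Fin n → F}
    (hv : triToeplitz F n c 1 *ᵥ v = 0) {k : ℕ} (hk : k ≤ n) :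
    zeroExtend v k = zeroExtend v 0 * (S F k).eval (-c) := by
  have row (j : ℕ) (hj : j < n) :
      zeroExtend v (j + 1) = -c * zeroExtend v j - zeroExtend v (j - 1) := by
    have := congrFun hv ⟨j, hj⟩
    rw [triToeplitz_mulVec_apply, ← zeroExtend_coe v] at this
    simp only [Pi.zero_apply] at this
    linear_combination this
  suffices ∀ k ≤ n, zeroExtend v (k - 1) = zeroExtend v 0 * (S F (k - 1)).eval (-c) ∧
      zeroExtend v k = zeroExtend v 0 * (S F k).eval (-c) from (this k hk).2
  intro k hk
  induction k with
  | zero => simp [zeroExtend_neg_one]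
  | succ k ih =>
    obtain ⟨ih₁, ih₂⟩ := ih (by omega)
    push_cast
    refine ⟨by simpa using ih₂, ?_⟩
    rw [row k (by omega), ih₁, ih₂, S_eval_add_one]
    ring

lemma triToeplitz_mulVec_S (c : F) (hc : (S F n).eval (-c) = 0) :
    triToeplitz F n c 1 *ᵥ (fun j : Fin n => (S F j).eval (-c)) = 0 := by
  have hext (k : ℤ) (hk₁ : -1 ≤ k) (hk₂ : k ≤ n) :
      zeroExtend (fun j : Fin n => (S F j).eval (-c)) k = (S F k).eval (-c) := by
    obtain rfl | hk₁ := hk₁.eq_or_lt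
    · simp [zeroExtend_neg_one]
    obtain rfl | hk₂ := hk₂.eq_or_lt
    · rw [zeroExtend_natCast_self, hc]
    lift k to ℕ using by omega
    exact zeroExtend_coe _ ⟨k, by omega⟩
  ext i
  rw [triToeplitz_mulVec_apply, hext _ (by omega) (by omega), hext _ (by omega) (by omega),
    S_eval_add_one]
  simp only [Pi.zero_apply]
  ring

lemma exists_triToeplitz_mulVec_eq_zero_iff (c : F) :
    (∃ v ≠ 0, triToeplitz F n c 1 *ᵥ v = 0) ↔ (S F n).eval (-c) = 0 := by
  constructor
  · rintro ⟨v, hv₀, hv⟩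
    have h₀ : zeroExtend v 0 ≠ 0 := by
      refine fun h => hv₀ (funext fun j => ?_)
      rw [← zeroExtend_coe v, zeroExtend_eq_mul_S_of_mulVec_eq_zero hv j.is_lt.le, h, zero_mul]
      rfl
    have := zeroExtend_eq_mul_S_of_mulVec_eq_zero hv le_rfl
    rw [zeroExtend_natCast_self] at this
    exact (mul_eq_zero.mp this.symm).resolve_left h₀
  · intro hc
    refine ⟨_, fun h => ?_, triToeplitz_mulVec_S c hc⟩
    obtain rfl | hn := n.eq_zero_or_pos
    · simp at hc
    simpa using congrFun h ⟨0, hn⟩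

lemma triToeplitz_eq_smul {a b : F} (hb : b ≠ 0) :
    triToeplitz F n a b = b • triToeplitz F n (a / b) 1 := by
  ext i j
  simp only [triToeplitz, of_apply, Matrix.smul_apply, smul_eq_mul]
  split_ifs <;> simp [mul_div_cancel₀ _ hb]

lemma isUnit_triToeplitz_iff {a b : F} (hb : b ≠ 0) :
    IsUnit (triToeplitz F n a b) ↔ (S F n).eval (-(a / b)) ≠ 0 := by
  rw [isUnit_iff_isUnit_det, isUnit_iff_ne_zero, triToeplitz_eq_smul hb, det_smul,
    mul_ne_zero_iff, and_iff_right (pow_ne_zero _ hb), Ne, ← exists_mulVec_eq_zero_iff,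
    exists_triToeplitz_mulVec_eq_zero_iff]

lemma one_add_triToeplitz (a b : F) : 1 + triToeplitz F n a b = triToeplitz F n (1 + a) b := by
  ext i j
  simp only [triToeplitz, Matrix.add_apply, one_apply, of_apply, Fin.ext_iff]
  split_ifs <;> first | omega | simp

lemma one_add_triToeplitz_sq [CharP F 2] (a b : F) :
    1 + triToeplitz F n a b ^ 2 = triToeplitz F n (1 + a) b ^ 2 := by
  have h2 : (2 : Matrix (Fin n) (Fin n) F) = 0 := by
    ext i j
    simp [ofNat_apply, CharTwo.two_eq_zero]
  rw [← one_add_triToeplitz, (Commute.one_left _).add_sq, h2]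
  simp

end TriToeplitz

lemma exists_add_inv_eq {K : Type*} [Field K] [IsAlgClosed K] (c : K) :
    ∃ x ≠ 0, x + x⁻¹ = c := by
  obtain ⟨x, hx⟩ := IsAlgClosed.exists_root (X ^ 2 - Polynomial.C c * X + 1 : K[X]) (by
    rw [show (X ^ 2 - Polynomial.C c * X + 1 : K[X]).degree = 2 by compute_degree!]; decide)
  simp only [IsRoot, eval_add, eval_sub, eval_pow, eval_mul, eval_X, eval_C, eval_one] at hx
  have hx₀ : x ≠ 0 := by rintro rfl; simp at hx
  refine ⟨x, hx₀, ?_⟩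
  field_simp
  linear_combination hx

lemma IsPrimitiveRoot.exists_pow_add_inv_pow_iff {K : Type*} [Field K] {θ : K} {m : ℕ}
    (hθ : IsPrimitiveRoot θ (m + 1)) (hm : Even m) (c : K) :
    (∃ i < m + 1, θ ^ i + θ⁻¹ ^ i = c) ↔ ∃ i ≤ m / 2, θ ^ i + θ⁻¹ ^ i = c := by
  refine ⟨fun ⟨i, hi, hc⟩ => ?_, fun ⟨i, hi, hc⟩ => ⟨i, by omega, hc⟩⟩
  by_cases hi' : i ≤ m / 2
  · exact ⟨i, hi', hc⟩
  have hθi : θ ^ (m + 1 - i) = (θ ^ i)⁻¹ := eq_inv_of_mul_eq_one_left <| by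
    rw [← pow_add, Nat.sub_add_cancel hi.le, hθ.pow_eq_one]
  obtain ⟨k, rfl⟩ := hm
  refine ⟨k + k + 1 - i, by omega, ?_⟩
  rw [inv_pow, hθi, inv_inv, add_comm, ← hc, inv_pow]

section Roots

variable {K : Type*} [Field K] [IsAlgClosed K] [CharP K 2] {θ : K} {n m r : ℕ}

lemma S_eval_eq_zero_iff_exists_pow (hθ : IsPrimitiveRoot θ (m + 1)) (hr : 1 ≤ r)
    (hnm : n + 1 = 2 ^ r * (m + 1)) (c : K) :
    (S K n).eval c = 0 ↔ ∃ i < m + 1, θ ^ i + θ⁻¹ ^ i = c := by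
  have hn : Odd n := by
    have : Even (n + 1) := hnm ▸ (Nat.even_pow.mpr ⟨even_two, by omega⟩).mul_right _
    exact Nat.not_even_iff_odd.mp (Nat.even_add_one.mp this)
  constructor
  · obtain ⟨x, hx₀, rfl⟩ := exists_add_inv_eq c
    rw [S_eval_add_inv_eq_zero_iff hx₀ hn, hnm, pow_expChar_pow_mul_eq_one_iff]
    intro hx
    obtain ⟨i, hi, rfl⟩ := hθ.eq_pow_of_pow_eq_one hx
    exact ⟨i, hi, by rw [inv_pow]⟩
  · rintro ⟨i, -, rfl⟩
    rw [inv_pow, S_eval_add_inv_eq_zero_iff (pow_ne_zero _ (hθ.ne_zero (by omega))) hn,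
      ← pow_mul, hθ.pow_eq_one_iff_dvd, hnm]
    exact (dvd_mul_left _ _).mul_left _

lemma S_eval_eq_zero_iff (hθ : IsPrimitiveRoot θ (m + 1)) (hm : Even m) (hr : 1 ≤ r)
    (hnm : n + 1 = 2 ^ r * (m + 1)) (c : K) :
    (S K n).eval c = 0 ↔ c = 0 ∨ ∃ i ∈ Set.Icc 1 (m / 2), θ ^ i + θ⁻¹ ^ i = c := by
  rw [S_eval_eq_zero_iff_exists_pow hθ hr hnm, hθ.exists_pow_add_inv_pow_iff hm]
  constructor
  · rintro ⟨_ | i, hi, rfl⟩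
    · simp [CharTwo.add_self_eq_zero]
    · exact .inr ⟨i + 1, ⟨by omega, hi⟩, rfl⟩
  · rintro (rfl | ⟨i, hi, rfl⟩)
    · exact ⟨0, Nat.zero_le _, by simp [CharTwo.add_self_eq_zero]⟩
    · exact ⟨i, hi.2, rfl⟩

end Roots

theorem stmt_18_general (F : Type*) [Field F] [CharP F 2]
    (n m r : ℕ) (hr : 1 ≤ r)
    (hnm : n + 1 = 2 ^ r * (m + 1)) (hm : Odd (m + 1))
    (a b : F) (hb : b ≠ 0)
    (θ : AlgebraicClosure F) (hθ : IsPrimitiveRoot θ (m + 1)) :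
    Even m ∧
    (0 < m →
      (IsUnit ((1 : Matrix (Fin n) (Fin n) F) + (triToeplitz F n a b) ^ 2) ↔
        algebraMap F (AlgebraicClosure F) (a / b) ∉
          ({-(algebraMap F (AlgebraicClosure F) b)⁻¹} ∪
            (fun i : ℕ =>
              -(algebraMap F (AlgebraicClosure F) b)⁻¹ + θ ^ i + θ⁻¹ ^ i) ''
              (Set.Icc 1 (m / 2))))) ∧
    (m = 0 →
      (IsUnit ((1 : Matrix (Fin n) (Fin n) F) + (triToeplitz F n a b) ^ 2) ↔
        a ≠ 1)) := by
  set ι := algebraMap F (AlgebraicClosure F)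
  have : CharP (AlgebraicClosure F) 2 := charP_of_injective_algebraMap ι.injective 2
  have hm' : Even m := Nat.not_odd_iff_even.mp (Nat.odd_add_one.mp hm)
  have key : IsUnit (1 + triToeplitz F n a b ^ 2) ↔
      ¬(ι ((1 + a) / b) = 0 ∨
        ∃ i ∈ Set.Icc 1 (m / 2), θ ^ i + θ⁻¹ ^ i = ι ((1 + a) / b)) := by
    rw [one_add_triToeplitz_sq, isUnit_pow_iff two_ne_zero, isUnit_triToeplitz_iff hb,
      CharTwo.neg_eq, ← S_eval_eq_zero_iff hθ hm' hr hnm, ← algebraMap_eval_S,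
      Ne, map_eq_zero_iff ι ι.injective]
  refine ⟨hm', fun _ => key.trans (not_congr ?_), fun hm0 => key.trans ?_⟩
  · have hc : ι ((1 + a) / b) = ι (a / b) + (ι b)⁻¹ := by
      rw [add_div, one_div, map_add, map_inv₀, add_comm]
    simp only [Set.mem_union, Set.mem_singleton_iff, Set.mem_image, hc]
    refine or_congr eq_neg_iff_add_eq_zero.symm
      (exists_congr fun i => and_congr_right fun _ => ?_)
    rw [add_assoc, neg_add_eq_iff_eq_add, add_comm (ι (a / b))]
  · subst hm0
    simp [hb, CharTwo.add_eq_zero, eq_comm (a := (1 : AlgebraicClosure F)),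
      map_eq_one_iff ι ι.injective]

/-- Characteristic 2, `b ≠ 0`, `n + 1 = 2^r (m+1)` with `r ≥ 1` and `m+1` odd:
`m` is even; if `m > 0` then `Ĉ_n(a,b)` is LCD (equivalently `1 + T̂_n(a,b)^2`
is invertible) iff `a/b ∉ {-1/b} ∪ {-1/b + θ^i + θ^{-i} : 1 ≤ i ≤ m/2}`;
if `m = 0` then `Ĉ_n(a,b)` is LCD iff `a ≠ 1`. -/
theorem stmt_18 (F : Type*) [Field F] [Fintype F] [CharP F 2]
    (n m r : ℕ) (hn : 2 ≤ n) (hr : 1 ≤ r)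
    (hnm : n + 1 = 2 ^ r * (m + 1)) (hm : Odd (m + 1))
    (a b : F) (hb : b ≠ 0)
    (θ : AlgebraicClosure F) (hθ : IsPrimitiveRoot θ (m + 1)) :
    Even m ∧
    (0 < m →
      (IsUnit ((1 : Matrix (Fin n) (Fin n) F) + (triToeplitz F n a b) ^ 2) ↔
        algebraMap F (AlgebraicClosure F) (a / b) ∉
          ({-(algebraMap F (AlgebraicClosure F) b)⁻¹} ∪
            (fun i : ℕ =>
              -(algebraMap F (AlgebraicClosure F) b)⁻¹ + θ ^ i + θ⁻¹ ^ i) ''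
              (Set.Icc 1 (m / 2))))) ∧
    (m = 0 →
      (IsUnit ((1 : Matrix (Fin n) (Fin n) F) + (triToeplitz F n a b) ^ 2) ↔
        a ≠ 1)) :=
  stmt_18_general F n m r hr hnm hm a b hb θ hθ
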